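/- arXiv:0906.3733 — 3 statements merged into one kernel-verified Lean document; each statement's English description precedes it below -/
import Mathlib

section
/- Let ψ : M → N and φ : N → L be K-linear maps of K-vector spaces. If two of the three maps ψ, φ, φ∘ψ are Fredholm, then so is the third, and in that case ind(φ∘ψ) = ind(φ) + ind(ψ). -/
/-! The maps `ψ`, `φ` and `φ ∘ ψ` fit into the exact sequence
`0 → ker ψ → ker (φ ∘ ψ) → ker φ → coker ψ → coker (φ ∘ ψ) → coker φ → 0`.
In an exact sequence of vector spaces a term is finite dimensional as soon as its two neighbours
are, which gives each of the three "two out of three" statements. The index formula is Mathlib's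
`LinearMap.index_comp`, proved from the same sequence: `fredInd` is `LinearMap.index` by
definition. -/

namespace Stmt0

noncomputable section

variable {K : Type*} [Field K]

/-- A `K`-linear map is Fredholm if its kernel and cokernel are finite dimensional. -/
def IsFredholm {V U : Type*} [AddCommGroup V] [Module K V] [AddCommGroup U] [Module K U]
    (f : V →ₗ[K] U) : Prop :=
  FiniteDimensional K (LinearMap.ker f) ∧ FiniteDimensional K (U ⧸ LinearMap.range f)

/-- The index of a (Fredholm) linear map: `dim ker - dim coker`. -/
def fredInd {V U : Type*} [AddCommGroup V] [Module K V] [AddCommGroup U] [Module K U]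
    (f : V →ₗ[K] U) : ℤ :=
  (Module.finrank K (LinearMap.ker f) : ℤ) - (Module.finrank K (U ⧸ LinearMap.range f) : ℤ)
open Function LinearMap Submodule

theorem _root_.Module.Finite.of_exact_of_isNoetherian {R A B C : Type*} [Ring R]
    [AddCommGroup A] [Module R A] [AddCommGroup B] [Module R B] [AddCommGroup C] [Module R C]
    [Module.Finite R A] [IsNoetherian R C] {f : A →ₗ[R] B} {g : B →ₗ[R] C} (hfg : Exact f g) :
    Module.Finite R B :=
  Module.Finite.of_exact (f := f) (g := g.rangeRestrict)
    (by rwa [exact_iff, ker_rangeRestrict, ← exact_iff]) g.surjective_rangeRestrict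

section KerCokerSequence

variable {R M N L : Type*} [Ring R] [AddCommGroup M] [Module R M] [AddCommGroup N] [Module R N]
  [AddCommGroup L] [Module R L] (ψ : M →ₗ[R] N) (φ : N →ₗ[R] L)

def kerToKerComp : ker ψ →ₗ[R] ker (φ ∘ₗ ψ) := inclusion (ker_le_ker_comp ψ φ)

def kerCompToKer : ker (φ ∘ₗ ψ) →ₗ[R] ker φ := ψ.restrict fun _ h ↦ h

def kerToCoker : ker φ →ₗ[R] N ⧸ range ψ := (range ψ).mkQ ∘ₗ (ker φ).subtype

def cokerToCokerComp : N ⧸ range ψ →ₗ[R] L ⧸ range (φ ∘ₗ ψ) :=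
  (range ψ).mapQ _ φ (by rw [← map_le_iff_le_comap, range_comp])

def cokerCompToCoker : L ⧸ range (φ ∘ₗ ψ) →ₗ[R] L ⧸ range φ :=
  factor (range_comp_le_range ψ φ)

theorem kerToKerComp_injective : Injective (kerToKerComp ψ φ) := inclusion_injective _

theorem exact_kerToKerComp_kerCompToKer : Exact (kerToKerComp ψ φ) (kerCompToKer ψ φ) := by
  rintro ⟨x, hx⟩
  constructor
  · intro h
    exact ⟨⟨x, congrArg Subtype.val h⟩, rfl⟩
  · rintro ⟨⟨y, hy⟩, h⟩
    cases h
    exact Subtype.ext hy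

theorem exact_kerCompToKer_kerToCoker : Exact (kerCompToKer ψ φ) (kerToCoker ψ φ) := by
  rintro ⟨y, hy⟩
  change Submodule.Quotient.mk y = 0 ↔ _
  rw [Submodule.Quotient.mk_eq_zero]
  constructor
  · rintro ⟨x, rfl⟩
    exact ⟨⟨x, hy⟩, rfl⟩
  · rintro ⟨⟨x, hx⟩, h⟩
    cases h
    exact ⟨x, rfl⟩

theorem exact_kerToCoker_cokerToCokerComp : Exact (kerToCoker ψ φ) (cokerToCokerComp ψ φ) := by
  rw [exact_iff]; simp [kerToCoker, cokerToCokerComp, range_comp, ker_mapQ, comap_map_eq]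

theorem exact_cokerToCokerComp_cokerCompToCoker :
    Exact (cokerToCokerComp ψ φ) (cokerCompToCoker ψ φ) := by
  rw [exact_iff]; simp [cokerToCokerComp, cokerCompToCoker, factor, ker_mapQ, range_mapQ]

theorem cokerCompToCoker_surjective : Surjective (cokerCompToCoker ψ φ) :=
  factor_surjective (range_comp_le_range ψ φ)

end KerCokerSequence

/-- If two of the three maps `ψ`, `φ`, `φ ∘ ψ` are Fredholm then so is the third, and in this
case `ind (φ ∘ ψ) = ind φ + ind ψ`. -/
theorem ind_comp {M N L : Type*} [AddCommGroup M] [Module K M] [AddCommGroup N] [Module K N]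
    [AddCommGroup L] [Module K L] (ψ : M →ₗ[K] N) (φ : N →ₗ[K] L) :
    (IsFredholm ψ → IsFredholm φ → IsFredholm (φ ∘ₗ ψ)) ∧
    (IsFredholm ψ → IsFredholm (φ ∘ₗ ψ) → IsFredholm φ) ∧
    (IsFredholm φ → IsFredholm (φ ∘ₗ ψ) → IsFredholm ψ) ∧
    (IsFredholm ψ → IsFredholm φ → fredInd (φ ∘ₗ ψ) = fredInd φ + fredInd ψ) := by
  refine ⟨fun ⟨_, _⟩ ⟨_, _⟩ ↦ ⟨?_, ?_⟩, fun ⟨_, _⟩ ⟨_, _⟩ ↦ ⟨?_, ?_⟩,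
    fun ⟨_, _⟩ ⟨_, _⟩ ↦ ⟨?_, ?_⟩, fun ⟨_, _⟩ ⟨_, _⟩ ↦ index_comp (f := ψ) φ⟩
  · exact .of_exact_of_isNoetherian (exact_kerToKerComp_kerCompToKer ψ φ)
  · exact .of_exact_of_isNoetherian (exact_cokerToCokerComp_cokerCompToCoker ψ φ)
  · exact .of_exact_of_isNoetherian (exact_kerCompToKer_kerToCoker ψ φ)
  · exact .of_surjective _ (cokerCompToCoker_surjective ψ φ)
  · exact .of_injective _ (kerToKerComp_injective ψ φ)
  · exact .of_exact_of_isNoetherian (exact_kerToCoker_cokerToCokerComp ψ φ)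

end

end Stmt0
end

section
/- For every subset J ⊆ {1,…,n} with |J| ≥ 2 and all distinct i, j ∈ J, one has θ_{ij}(J)·θ_{ji}(J) = 1 and θ_{ji}(J)·θ_{ij}(J) = 1 in 𝕊_n; in particular θ_{ij}(J) is a unit of 𝕊_n with inverse θ_{ji}(J). -/
set_option synthInstance.maxHeartbeats 1000000
set_option maxHeartbeats 1600000

open MvPolynomial

namespace SnAlg

noncomputable section

variable (K : Type*) [Field K] [CharZero K] (n : ℕ)

/-- The polynomial algebra `P_n = K[x_1,…,x_n]`. -/
abbrev Poly := MvPolynomial (Fin n) K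

/-- The operator `x_i` : multiplication by the variable `x_i`. -/
def xop (i : Fin n) : Module.End K (Poly K n) := LinearMap.mulLeft K (X i)

/-- The operator `y_i`, the one-sided inverse of `x_i`: it sends the monomial `x^α` to
`x^{α - e_i}` if `α_i > 0` and to `0` otherwise. -/
def yop (i : Fin n) : Module.End K (Poly K n) :=
  (MvPolynomial.basisMonomials (Fin n) K).constr K fun α =>
    if α i = 0 then 0
    else (MvPolynomial.basisMonomials (Fin n) K) (α - Finsupp.single i 1)

/-- The algebra `𝕊_n` of one-sided inverses of `P_n`: the subalgebra of `End_K(P_n)`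
generated by `x_1,…,x_n,y_1,…,y_n`. -/
def Sn : Subalgebra K (Module.End K (Poly K n)) :=
  Algebra.adjoin K (Set.range (xop K n) ∪ Set.range (yop K n))

/-- `x_i` as an element of `𝕊_n`. -/
def Xe (i : Fin n) : Sn K n :=
  ⟨xop K n i, Algebra.subset_adjoin (Set.mem_union_left _ ⟨i, rfl⟩)⟩

/-- `y_i` as an element of `𝕊_n`. -/
def Ye (i : Fin n) : Sn K n :=
  ⟨yop K n i, Algebra.subset_adjoin (Set.mem_union_right _ ⟨i, rfl⟩)⟩

/-- The two-sided ideal `𝔭_i` of `𝕊_n` generated by `1 - x_i y_i`. -/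
def pIdeal (i : Fin n) : TwoSidedIdeal (Sn K n) :=
  TwoSidedIdeal.span {1 - Xe K n i * Ye K n i}

/-- `e_J := ∏_{k ∈ J} (1 - x_k y_k)` (the factors pairwise commute; the product is taken in
increasing order of the indices). -/
def eSet (J : Finset (Fin n)) : Sn K n :=
  ((J.sort (· ≤ ·)).map fun k => 1 - Xe K n k * Ye K n k).prod

/-- `μ_J(a) := a e_J + 1 - e_J`. -/
def mu (J : Finset (Fin n)) (a : Sn K n) : Sn K n :=
  a * eSet K n J + 1 - eSet K n J

/-- `θ_{ij}(J) := μ_{J∖i}(y_i) · μ_{J∖j}(x_j)`. -/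
def theta (J : Finset (Fin n)) (i j : Fin n) : Sn K n :=
  mu K n (J.erase i) (Ye K n i) * mu K n (J.erase j) (Xe K n j)

/-- The factor `E_{kl}(i) = x_i^k y_i^l - x_i^{k+1} y_i^{l+1}`. -/
def Efac (i : Fin n) (k l : ℕ) : Sn K n :=
  Xe K n i ^ k * Ye K n i ^ l - Xe K n i ^ (k + 1) * Ye K n i ^ (l + 1)

/-- `E_{αβ} := ∏_{i=1}^n E_{α_i β_i}(i)`. -/
def Eab (α β : Fin n → ℕ) : Sn K n :=
  ((List.finRange n).map fun i => Efac K n i (α i) (β i)).prod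

/-- `F_n`, the `K`-linear span of all the `E_{αβ}`. -/
def Fn : Submodule K (Sn K n) :=
  Submodule.span K {f | ∃ α β : Fin n → ℕ, f = Eab K n α β}

/-- A `K`-linear map is Fredholm if its kernel and cokernel are finite dimensional. -/
def IsFredholm {V U : Type*} [AddCommGroup V] [Module K V] [AddCommGroup U] [Module K U]
    (f : V →ₗ[K] U) : Prop :=
  FiniteDimensional K (LinearMap.ker f) ∧ FiniteDimensional K (U ⧸ LinearMap.range f)

/-- The index of a (Fredholm) linear map: `dim ker - dim coker`. -/
def fredInd {V U : Type*} [AddCommGroup V] [Module K V] [AddCommGroup U] [Module K U]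
    (f : V →ₗ[K] U) : ℤ :=
  (Module.finrank K (LinearMap.ker f) : ℤ) - (Module.finrank K (U ⧸ LinearMap.range f) : ℤ)

/-! For an idempotent `e`, the corner map `μ_e(a) = a e + 1 - e` satisfies
`μ_e(a) μ_e(b) = μ_e(a b)` whenever `b` commutes with `e`. As `y_i x_i = 1`, this gives
`μ_{J∖j}(x_j) μ_{J∖j}(y_j) = 1 - e_J`, which is symmetric in `i` and `j`; hence, with
`μ = μ_{J∖i}`, `θ_{ij} θ_{ji} = μ(y_i) μ(x_i y_i) μ(x_i) = μ(y_i x_i y_i x_i) = 1`. -/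

section IdempotentCorner

theorem _root_.IsIdempotentElem.list_prod {M : Type*} [Monoid M] {l : List M}
    (hc : l.Pairwise Commute) (hl : ∀ a ∈ l, IsIdempotentElem a) :
    IsIdempotentElem l.prod := by
  induction l with
  | nil => exact IsIdempotentElem.one
  | cons a l ih =>
    rw [List.pairwise_cons] at hc
    rw [List.prod_cons]
    exact IsIdempotentElem.mul_of_commute (Commute.list_prod_right l a hc.1)
      (hl a List.mem_cons_self) (ih hc.2 fun b hb => hl b (List.mem_cons_of_mem a hb))

theorem _root_.isIdempotentElem_mul_of_mul_eq_one {M : Type*} [Monoid M] {x y : M} (h : y * x = 1) :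
    IsIdempotentElem (x * y) := by
  rw [IsIdempotentElem, mul_assoc, ← mul_assoc y, h, one_mul]

variable {R : Type*} [Ring R] {e a b : R}

theorem _root_.IsIdempotentElem.mul_add_one_sub_mul (he : IsIdempotentElem e) (hb : Commute e b) :
    (a * e + 1 - e) * (b * e + 1 - e) = a * b * e + 1 - e := by
  have hfb : Commute (1 - e) b := (Commute.one_left b).sub_left hb
  calc (a * e + 1 - e) * (b * e + 1 - e)
      = a * (e * b) * e + a * (e * (1 - e)) + (1 - e) * b * e + (1 - e) * (1 - e) := by
        noncomm_ring
    _ = a * b * (e * e) + b * ((1 - e) * e) + (1 - e) * (1 - e) := by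
        rw [hb.eq, hfb.eq, he.mul_one_sub_self]; noncomm_ring
    _ = a * b * e + 1 - e := by
        rw [he.eq, he.one_sub_mul_self, he.one_sub.eq]; noncomm_ring

end IdempotentCorner

section

omit [CharZero K]

theorem xop_monomial (i : Fin n) (α : Fin n →₀ ℕ) :
    xop K n i (monomial α 1) = monomial (α + Finsupp.single i 1) (1 : K) := by
  rw [xop, LinearMap.mulLeft_apply, X, monomial_mul, one_mul, add_comm]

theorem yop_monomial (i : Fin n) (α : Fin n →₀ ℕ) :
    yop K n i (monomial α 1) =
      if α i = 0 then 0 else monomial (α - Finsupp.single i 1) (1 : K) := by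
  have h := (basisMonomials (Fin n) K).constr_basis K
    (fun α => if α i = 0 then 0 else basisMonomials (Fin n) K (α - Finsupp.single i 1)) α
  simp only [coe_basisMonomials] at h
  exact h

theorem yop_mul_xop (i : Fin n) : yop K n i * xop K n i = 1 := by
  refine (basisMonomials (Fin n) K).ext fun α => ?_
  simp [coe_basisMonomials, xop_monomial, yop_monomial]

theorem commute_xop_xop (i j : Fin n) : Commute (xop K n i) (xop K n j) := by
  simp only [Commute, SemiconjBy, xop, Module.End.mul_eq_comp, ← LinearMap.mulLeft_mul, mul_comm]

theorem commute_xop_yop {i j : Fin n} (hij : i ≠ j) : Commute (xop K n i) (yop K n j) := by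
  refine (basisMonomials (Fin n) K).ext fun α => ?_
  have hα : α + Finsupp.single i 1 - Finsupp.single j 1 =
      α - Finsupp.single j 1 + Finsupp.single i 1 := by
    ext k
    simp only [Finsupp.tsub_apply, Finsupp.add_apply, Finsupp.single_apply]
    split_ifs <;> omega
  by_cases hj : α j = 0 <;>
    simp [coe_basisMonomials, xop_monomial, yop_monomial, Finsupp.single_eq_of_ne' hij, hj, hα]

theorem commute_yop_yop {i j : Fin n} (hij : i ≠ j) : Commute (yop K n i) (yop K n j) := by
  refine (basisMonomials (Fin n) K).ext fun α => ?_
  have hα : α - Finsupp.single j 1 - Finsupp.single i 1 =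
      α - Finsupp.single i 1 - Finsupp.single j 1 := by
    ext k
    simp only [Finsupp.tsub_apply, Finsupp.single_apply]
    split_ifs <;> omega
  by_cases hi : α i = 0 <;> by_cases hj : α j = 0 <;>
    simp [coe_basisMonomials, yop_monomial, Finsupp.single_eq_of_ne' hij,
      Finsupp.single_eq_of_ne hij, hi, hj, hα]

theorem Ye_mul_Xe (i : Fin n) : Ye K n i * Xe K n i = 1 :=
  Subtype.ext (yop_mul_xop K n i)

theorem commute_Xe_Xe (i j : Fin n) : Commute (Xe K n i) (Xe K n j) :=
  Subtype.ext (commute_xop_xop K n i j)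

theorem commute_Xe_Ye {i j : Fin n} (hij : i ≠ j) : Commute (Xe K n i) (Ye K n j) :=
  Subtype.ext (commute_xop_yop K n hij)

theorem commute_Ye_Ye {i j : Fin n} (hij : i ≠ j) : Commute (Ye K n i) (Ye K n j) :=
  Subtype.ext (commute_yop_yop K n hij)

theorem commute_one_sub_Xe_mul_Ye {c : Sn K n} {k : Fin n}
    (hx : Commute c (Xe K n k)) (hy : Commute c (Ye K n k)) :
    Commute c (1 - Xe K n k * Ye K n k) :=
  Commute.sub_right (R := Sn K n) (Commute.one_right c) (hx.mul_right hy)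

theorem commute_Xe_one_sub_Xe_mul_Ye {i k : Fin n} (hik : i ≠ k) :
    Commute (Xe K n i) (1 - Xe K n k * Ye K n k) :=
  commute_one_sub_Xe_mul_Ye K n (commute_Xe_Xe K n i k) (commute_Xe_Ye K n hik)

theorem commute_Ye_one_sub_Xe_mul_Ye {i k : Fin n} (hik : i ≠ k) :
    Commute (Ye K n i) (1 - Xe K n k * Ye K n k) :=
  commute_one_sub_Xe_mul_Ye K n (commute_Xe_Ye K n hik.symm).symm (commute_Ye_Ye K n hik)

theorem commute_one_sub_Xe_mul_Ye_one_sub_Xe_mul_Ye (k l : Fin n) :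
    Commute (1 - Xe K n k * Ye K n k) (1 - Xe K n l * Ye K n l) := by
  rcases eq_or_ne k l with rfl | hkl
  · exact Commute.refl _
  · exact commute_one_sub_Xe_mul_Ye K n
      (commute_Xe_one_sub_Xe_mul_Ye K n hkl.symm).symm
      (commute_Ye_one_sub_Xe_mul_Ye K n hkl.symm).symm

theorem pairwise_commute_eSet_factors (J : Finset (Fin n)) :
    ((J.sort (· ≤ ·)).map fun k => 1 - Xe K n k * Ye K n k).Pairwise Commute :=
  List.pairwise_map.2 (List.pairwise_of_forall (commute_one_sub_Xe_mul_Ye_one_sub_Xe_mul_Ye K n))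

theorem isIdempotentElem_eSet (J : Finset (Fin n)) : IsIdempotentElem (eSet K n J) := by
  refine IsIdempotentElem.list_prod (pairwise_commute_eSet_factors K n J) fun a ha => ?_
  obtain ⟨k, -, rfl⟩ := List.mem_map.1 ha
  exact IsIdempotentElem.one_sub (R := Sn K n)
    (isIdempotentElem_mul_of_mul_eq_one (Ye_mul_Xe K n k))

theorem commute_eSet {c : Sn K n} {J : Finset (Fin n)}
    (h : ∀ k ∈ J, Commute c (1 - Xe K n k * Ye K n k)) : Commute c (eSet K n J) := by
  refine Commute.list_prod_right _ _ fun b hb => ?_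
  obtain ⟨k, hk, rfl⟩ := List.mem_map.1 hb
  exact h k ((Finset.mem_sort _).1 hk)

theorem commute_eSet_Xe {J : Finset (Fin n)} {i : Fin n} (hi : i ∉ J) :
    Commute (eSet K n J) (Xe K n i) :=
  (commute_eSet K n fun _ hk =>
    commute_Xe_one_sub_Xe_mul_Ye K n (ne_of_mem_of_not_mem hk hi).symm).symm

theorem commute_eSet_Ye {J : Finset (Fin n)} {i : Fin n} (hi : i ∉ J) :
    Commute (eSet K n J) (Ye K n i) :=
  (commute_eSet K n fun _ hk =>
    commute_Ye_one_sub_Xe_mul_Ye K n (ne_of_mem_of_not_mem hk hi).symm).symm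

theorem eSet_eq_mul_eSet_erase {J : Finset (Fin n)} {i : Fin n} (hi : i ∈ J) :
    eSet K n J = (1 - Xe K n i * Ye K n i) * eSet K n (J.erase i) := by
  have hperm : (J.sort (· ≤ ·)).Perm (i :: (J.erase i).sort (· ≤ ·)) := by
    rw [← Multiset.coe_eq_coe, ← Multiset.cons_coe, Finset.sort_eq, Finset.sort_eq,
      Finset.erase_val, Multiset.cons_erase (Finset.mem_def.1 hi)]
  rw [eSet, (hperm.map _).prod_eq' (pairwise_commute_eSet_factors K n J), List.map_cons,
    List.prod_cons, eSet]

theorem mu_mul_mu {J : Finset (Fin n)} {a b : Sn K n} (hb : Commute (eSet K n J) b) :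
    mu K n J a * mu K n J b = mu K n J (a * b) :=
  IsIdempotentElem.mul_add_one_sub_mul (R := Sn K n) (isIdempotentElem_eSet K n J) hb

theorem mu_one (J : Finset (Fin n)) : mu K n J 1 = 1 := by
  rw [mu, one_mul]
  exact add_sub_cancel_left (G := Sn K n) _ _

theorem mu_erase_Xe_mul_Ye {J : Finset (Fin n)} {i : Fin n} (hi : i ∈ J) :
    mu K n (J.erase i) (Xe K n i * Ye K n i) = 1 - eSet K n J := by
  rw [mu, eSet_eq_mul_eSet_erase K n hi, sub_mul (α := Sn K n), one_mul]
  abel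

theorem theta_mul_theta {J : Finset (Fin n)} {i j : Fin n} (hi : i ∈ J) (hj : j ∈ J) :
    theta K n J i j * theta K n J j i = 1 := by
  have hx := commute_eSet_Xe K n (J.notMem_erase i)
  have hy := commute_eSet_Ye K n (J.notMem_erase i)
  calc theta K n J i j * theta K n J j i
      = mu K n (J.erase i) (Ye K n i) *
          (mu K n (J.erase j) (Xe K n j) * mu K n (J.erase j) (Ye K n j)) *
          mu K n (J.erase i) (Xe K n i) := by
        simp only [theta, mul_assoc]
    _ = mu K n (J.erase i) (Ye K n i) * mu K n (J.erase i) (Xe K n i * Ye K n i) *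
          mu K n (J.erase i) (Xe K n i) := by
        rw [mu_mul_mu K n (commute_eSet_Ye K n (J.notMem_erase j)), mu_erase_Xe_mul_Ye K n hj,
          mu_erase_Xe_mul_Ye K n hi]
    _ = mu K n (J.erase i) (Ye K n i * Xe K n i * (Ye K n i * Xe K n i)) := by
        rw [mu_mul_mu K n (hx.mul_right hy), mu_mul_mu K n hx]
        simp only [mul_assoc]
    _ = 1 := by rw [Ye_mul_Xe, one_mul, mu_one]

end

theorem theta_mul_theta_eq_one (J : Finset (Fin n))
    (i j : Fin n) (hi : i ∈ J) (hj : j ∈ J) :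
    theta K n J i j * theta K n J j i = 1 ∧
    theta K n J j i * theta K n J i j = 1 ∧
    IsUnit (theta K n J i j) :=
  ⟨theta_mul_theta K n hi hj, theta_mul_theta K n hj hi,
    ⟨⟨_, _, theta_mul_theta K n hi hj, theta_mul_theta K n hj hi⟩, rfl⟩⟩

end

end SnAlg
end

section
/- Let A and B be groups with A acting on B by automorphisms (a,b) ↦ ᵃb, and form the semidirect product G = A ⋉ B. Let [A,B] denote the subgroup of B generated by all elements ᵃb·b^{-1} with a ∈ A, b ∈ B. Then the commutator subgroup of G is [G,G] = [A,A] ⋉ ([A,B]·[B,B]); consequently B ∩ [G,G] = [A,B]·[B,B] and G/[G,G] ≅ (A/[A,A]) × (B/([A,B]·[B,B])). -/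
/-!
The map `g ↦ (g.right mod [A,A], g.left mod C)` is a homomorphism `A ⋉ B → (A/[A,A]) × (B/C)`
because `C` contains every `ᵃb·b⁻¹`, so `A` acts trivially on `B/C`; it is onto with kernel
`[A,A] ⋉ C`, and its target is abelian since `C ⊇ [B,B]`, so `[G,G] ⊆ [A,A] ⋉ C`. Conversely
`ᵃb·b⁻¹ = [a, b]` in `G`, so `C` and likewise `[A,A]` lie in `[G,G]`. Hence `[G,G]` is the kernel
of this map, and the three claims follow.
-/

namespace Stmt17

section SemidirectCommutator

open SemidirectProduct

open scoped commutatorElement IsMulCommutative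

theorem map_commutator_le_commutator {G H : Type*} [Group G] [Group H] (f : G →* H) :
    (commutator G).map f ≤ commutator H := by
  rw [commutator_def, commutator_def, Subgroup.map_commutator]
  exact Subgroup.commutator_mono le_top le_top

variable {A B : Type*} [Group A] [Group B] {φ : A →* MulAut B}

variable (φ) in
/-- The subgroup `[A,B]`. -/
def actionCommutator : Subgroup B :=
  Subgroup.closure {x : B | ∃ (a : A) (b : B), x = φ a b * b⁻¹}

theorem mul_inv_apply_mem_actionCommutator (a : A) (b : B) :
    φ a b * b⁻¹ ∈ actionCommutator φ :=
  Subgroup.subset_closure ⟨a, b, rfl⟩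

theorem inl_mul_inv_apply_eq_commutatorElement (a : A) (b : B) :
    (inl (φ a b * b⁻¹) : B ⋊[φ] A) = ⁅(inr a : B ⋊[φ] A), inl b⁆ := by
  rw [commutatorElement_def, map_mul, inl_aut, map_inv, map_inv]

theorem map_inl_actionCommutator_le_commutator :
    (actionCommutator φ).map inl ≤ commutator (B ⋊[φ] A) := by
  rw [Subgroup.map_le_iff_le_comap, actionCommutator, Subgroup.closure_le]
  rintro _ ⟨a, b, rfl⟩
  rw [SetLike.mem_coe, Subgroup.mem_comap, inl_mul_inv_apply_eq_commutatorElement]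
  exact Subgroup.commutator_mem_commutator (Subgroup.mem_top _) (Subgroup.mem_top _)

section Quotient

variable (N : Subgroup B) [N.Normal]

theorem mk_apply_eq_mk_of_actionCommutator_le (hN : actionCommutator φ ≤ N)
    (a : A) (b : B) : ((φ a b : B) : B ⧸ N) = b := by
  rw [QuotientGroup.eq_iff_div_mem, div_eq_mul_inv]
  exact hN (mul_inv_apply_mem_actionCommutator a b)

def toQuotientProd (hN : actionCommutator φ ≤ N) :
    B ⋊[φ] A →* (A ⧸ commutator A) × (B ⧸ N) :=
  lift ((MonoidHom.inr _ _).comp (QuotientGroup.mk' N))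
    ((MonoidHom.inl _ _).comp (QuotientGroup.mk' (commutator A))) fun a => by
      ext b <;> simp [mk_apply_eq_mk_of_actionCommutator_le N hN]

variable {N}

theorem toQuotientProd_apply (hN : actionCommutator φ ≤ N) (g : B ⋊[φ] A) :
    toQuotientProd N hN g = ((g.right : A ⧸ commutator A), (g.left : B ⧸ N)) := by
  simp [toQuotientProd, lift]

theorem toQuotientProd_surjective (hN : actionCommutator φ ≤ N) :
    Function.Surjective (toQuotientProd N hN) := by
  rintro ⟨x, y⟩
  obtain ⟨a, rfl⟩ := QuotientGroup.mk_surjective x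
  obtain ⟨b, rfl⟩ := QuotientGroup.mk_surjective y
  exact ⟨⟨b, a⟩, toQuotientProd_apply hN _⟩

theorem mem_ker_toQuotientProd (hN : actionCommutator φ ≤ N) (g : B ⋊[φ] A) :
    g ∈ (toQuotientProd N hN).ker ↔ g.right ∈ commutator A ∧ g.left ∈ N := by
  rw [MonoidHom.mem_ker, toQuotientProd_apply, Prod.mk_eq_one, QuotientGroup.eq_one_iff,
    QuotientGroup.eq_one_iff]

theorem ker_toQuotientProd (hN : actionCommutator φ ≤ N) :
    (toQuotientProd N hN).ker = N.map inl ⊔ (commutator A).map inr := by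
  apply le_antisymm
  · intro g hg
    rw [mem_ker_toQuotientProd] at hg
    rw [← inl_left_mul_inr_right g]
    exact mul_mem (Subgroup.mem_sup_left ⟨g.left, hg.2, rfl⟩)
      (Subgroup.mem_sup_right ⟨g.right, hg.1, rfl⟩)
  · refine sup_le ?_ ?_ <;> rintro _ ⟨x, hx, rfl⟩ <;>
      rw [mem_ker_toQuotientProd] <;> simpa [one_mem] using hx

theorem commutator_le_ker_toQuotientProd (hN : actionCommutator φ ≤ N)
    (hBN : commutator B ≤ N) : commutator (B ⋊[φ] A) ≤ (toQuotientProd N hN).ker :=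
  have : IsMulCommutative (B ⧸ N) :=
    Subgroup.Normal.quotient_commutative_iff_commutator_le.mpr hBN
  have : IsMulCommutative (A ⧸ commutator A) :=
    Subgroup.Normal.quotient_commutative_iff_commutator_le.mpr le_rfl
  Abelianization.commutator_subset_ker _

theorem commutator_eq_ker_toQuotientProd (hN : N = actionCommutator φ ⊔ commutator B) :
    commutator (B ⋊[φ] A) = (toQuotientProd N (hN ▸ le_sup_left)).ker := by
  refine le_antisymm (commutator_le_ker_toQuotientProd _ (hN ▸ le_sup_right)) ?_
  rw [ker_toQuotientProd, hN, Subgroup.map_sup]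
  exact sup_le (sup_le map_inl_actionCommutator_le_commutator (map_commutator_le_commutator _))
    (map_commutator_le_commutator _)

end Quotient

end SemidirectCommutator

/-- Let `A` act on `B` by automorphisms via `φ` and let `G = A ⋉ B` (realized in Mathlib as
`B ⋊[φ] A`). Let `[A,B]` be the subgroup of `B` generated by the elements `ᵃb·b⁻¹` and let
`C = [A,B]·[B,B]` (a normal subgroup of `G`). Then `[G,G] = [A,A] ⋉ C`; consequently
`B ∩ [G,G] = C` and `G/[G,G] ≅ (A/[A,A]) × (B/C)`. -/
theorem commutator_semidirect {A B : Type*} [Group A] [Group B] (φ : A →* MulAut B)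
    (C : Subgroup B)
    (hC : C = Subgroup.closure {x : B | ∃ (a : A) (b : B), x = φ a b * b⁻¹} ⊔ commutator B)
    [hCB : C.Normal] :
    commutator (B ⋊[φ] A) =
        Subgroup.map SemidirectProduct.inl C ⊔
          Subgroup.map SemidirectProduct.inr (commutator A) ∧
    (∀ b : B, SemidirectProduct.inl b ∈ commutator (B ⋊[φ] A) ↔ b ∈ C) ∧
    Nonempty (((B ⋊[φ] A) ⧸ commutator (B ⋊[φ] A)) ≃* (A ⧸ commutator A) × (B ⧸ C)) := by
  have hN : actionCommutator φ ≤ C := hC ▸ le_sup_left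
  have hker : commutator (B ⋊[φ] A) = (toQuotientProd C hN).ker :=
    commutator_eq_ker_toQuotientProd hC
  refine ⟨hker.trans (ker_toQuotientProd hN), fun b => ?_, ?_⟩
  · rw [hker, mem_ker_toQuotientProd]
    simp [one_mem]
  · exact ⟨(QuotientGroup.quotientMulEquivOfEq hker).trans
      (QuotientGroup.quotientKerEquivOfSurjective _ (toQuotientProd_surjective hN))⟩

end Stmt17
end
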